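/- If f and g in the maximal ideal of K[[x_1,...,x_n]] are right equivalent (g = φ(f) for some K-algebra automorphism φ of K[[x]]), then for every k ≥ 0 the k-th Milnor algebras M_k(f) = K[[x]]/m^k·j(f) and M_k(g) = K[[x]]/m^k·j(g) are isomorphic as K[[t]]-algebras, where t acts on M_k(f) by multiplication with the class of f and on M_k(g) by multiplication with the class of g. -/

import Mathlib

/-!
A `K`-algebra automorphism `ψ` of `K[[x]]` preserves units, hence `ψ(m) = m`, and by the chain
rule `∂ᵢ(ψ f) = ∑ⱼ ψ(∂ⱼ f) · ∂ᵢ(ψ xⱼ)` it maps `j(f)` onto `j(ψ f)`. So `ψ` maps `m^k j(f)` onto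
`m^k j(ψ f)` and descends to an isomorphism of the quotients sending the class of `f` to that
of `ψ f`.

The chain rule comes from the derivation `ψ⁻¹ ∘ ∂ᵢ ∘ ψ`: a `K`-derivation `D` with
`D(m^(N+1)) ⊆ m^N` for all `N` equals `∑ⱼ D(xⱼ) ∂ⱼ`, because both agree on polynomials, every
power series is a polynomial modulo `m^(N+1)`, and `⋂ m^N = 0`.
-/

noncomputable section

/-- The formal power series ring `K[[x_1,...,x_n]]`. -/
abbrev PS (K : Type*) [Field K] (n : ℕ) := MvPowerSeries (Fin n) K

/-- The maximal ideal `m` of `K[[x]]` (power series with zero constant term). -/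
def mx (K : Type*) [Field K] (n : ℕ) : Ideal (PS K n) :=
  RingHom.ker (MvPowerSeries.constantCoeff (σ := Fin n) (R := K))

/-- The `i`-th formal partial derivative of a power series. -/
def pd {K : Type*} [Field K] {n : ℕ} (i : Fin n) (f : PS K n) : PS K n :=
  fun e => (e i + 1 : ℕ) • MvPowerSeries.coeff (R := K) (e + Finsupp.single i 1) f

/-- The Jacobian ideal `j(f) = ⟨∂f/∂x_1, ..., ∂f/∂x_n⟩`. -/
def jId {K : Type*} [Field K] {n : ℕ} (f : PS K n) : Ideal (PS K n) :=
  Ideal.span (Set.range fun i => pd i f)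

/-- The Tjurina ideal `tj(f) = ⟨f⟩ + j(f)`. -/
def tjId {K : Type*} [Field K] {n : ℕ} (f : PS K n) : Ideal (PS K n) :=
  Ideal.span {f} ⊔ jId f

/-- The ideal defining the `k`-th Tjurina algebra: `⟨f, m^k j(f)⟩`. -/
def TkId {K : Type*} [Field K] {n : ℕ} (k : ℕ) (f : PS K n) : Ideal (PS K n) :=
  Ideal.span {f} ⊔ (mx K n) ^ k * jId f

/-- The ideal defining the `k`-th Milnor algebra: `m^k j(f)`. -/
def MkId {K : Type*} [Field K] {n : ℕ} (k : ℕ) (f : PS K n) : Ideal (PS K n) :=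
  (mx K n) ^ k * jId f

/-- Contact equivalence: `g = u · φ(f)`. -/
def ContactEquiv {K : Type*} [Field K] {n : ℕ} (f g : PS K n) : Prop :=
  ∃ (φ : PS K n ≃ₐ[K] PS K n) (u : (PS K n)ˣ), g = (u : PS K n) * φ f

/-- Right equivalence: `g = φ(f)`. -/
def RightEquiv {K : Type*} [Field K] {n : ℕ} (f g : PS K n) : Prop :=
  ∃ φ : PS K n ≃ₐ[K] PS K n, g = φ f

/-- `f` is contact `N`-determined. -/
def ContactDetermined {K : Type*} [Field K] {n : ℕ} (N : ℕ) (f : PS K n) : Prop :=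
  ∀ g : PS K n, g - f ∈ (mx K n) ^ (N + 1) → ContactEquiv f g

/-- `f` is right `N`-determined. -/
def RightDetermined {K : Type*} [Field K] {n : ℕ} (N : ℕ) (f : PS K n) : Prop :=
  ∀ g : PS K n, g - f ∈ (mx K n) ^ (N + 1) → RightEquiv f g

namespace MvPowerSeries

theorem exists_eq_sum_X_mul {σ R : Type*} [CommSemiring R] [Fintype σ] [LinearOrder σ] {N : ℕ}
    {f : MvPowerSeries σ R} (hf : (N + 1 : ℕ) ≤ f.order) :
    ∃ g : σ → MvPowerSeries σ R, f = ∑ j, X j * g j ∧ ∀ j, (N : ℕ∞) ≤ (g j).order := by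
  -- split the monomials of `f` according to the smallest variable they contain
  let part (j : σ) : MvPowerSeries σ R := fun d => if d.support.min = j then coeff d f else 0
  have hdvd (j : σ) : X j ∣ part j := by
    refine X_dvd_iff.2 fun d hd => if_neg fun hmin => ?_
    exact Finsupp.mem_support_iff.1 (Finset.mem_of_min hmin) hd
  choose g hg using hdvd
  refine ⟨g, ?_, fun j => nat_le_order fun d hd => ?_⟩
  · ext d
    simp_rw [map_sum, ← hg]
    change _ = ∑ j : σ, if d.support.min = (j : WithTop σ) then coeff d f else 0
    cases hmin : d.support.min with
    | top =>
      have hd : d = 0 := by simpa using hmin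
      have h0 : constantCoeff f = 0 :=
        one_le_order_iff_constCoeff_eq_zero.1 (le_trans (by simp) hf)
      simp [hd, h0]
    | coe j₀ => simp
  · have hcoeff := congrArg (coeff (Finsupp.single j 1 + d)) (hg j)
    rw [X, coeff_add_monomial_mul, one_mul] at hcoeff
    have hlt : ((Finsupp.single j 1 + d).degree : ℕ∞) < f.order := by
      refine lt_of_lt_of_le ?_ hf
      simp only [map_add, Finsupp.degree_single]
      exact_mod_cast (by omega : 1 + d.degree < N + 1)
    rw [← hcoeff]
    exact ite_eq_right_iff.2 fun _ => coeff_of_lt_order hlt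

end MvPowerSeries

def Derivation.conj {R A : Type*} [CommSemiring R] [CommSemiring A] [Algebra R A]
    (ψ : A ≃ₐ[R] A) (D : Derivation R A A) : Derivation R A A where
  toLinearMap := ψ.symm.toLinearMap ∘ₗ D.toLinearMap ∘ₗ ψ.toLinearMap
  map_one_eq_zero' := by simp
  leibniz' a b := by simp [D.leibniz]

@[simp]
theorem Derivation.conj_apply {R A : Type*} [CommSemiring R] [CommSemiring A] [Algebra R A]
    (ψ : A ≃ₐ[R] A) (D : Derivation R A A) (a : A) : D.conj ψ a = ψ.symm (D (ψ a)) := rfl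

open MvPowerSeries

section

variable {K : Type*} [Field K] {n : ℕ}

theorem pd_eq_pderiv (i : Fin n) (f : PS K n) : pd i f = pderiv K i f := by
  ext d
  rw [coeff_pderiv]
  show (d i + 1 : ℕ) • coeff _ f = _
  rw [nsmul_eq_mul, mul_comm]
  push_cast
  rfl

theorem mem_mx_iff {f : PS K n} : f ∈ mx K n ↔ constantCoeff f = 0 := RingHom.mem_ker

theorem mem_mx_iff_not_isUnit {f : PS K n} : f ∈ mx K n ↔ ¬IsUnit f := by
  rw [mem_mx_iff, isUnit_iff_constantCoeff, isUnit_iff_ne_zero, not_not]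

theorem mem_mx_pow_iff {N : ℕ} {f : PS K n} : f ∈ mx K n ^ N ↔ (N : ℕ∞) ≤ f.order := by
  induction N generalizing f with
  | zero => simp
  | succ N ih =>
    refine ⟨fun hf => ?_, fun hf => ?_⟩
    · rw [pow_succ] at hf
      refine Submodule.mul_induction_on hf (fun a ha b hb => ?_) (fun a b ha hb => ?_)
      · have hb' : 1 ≤ b.order := one_le_order_iff_constCoeff_eq_zero.2 (mem_mx_iff.1 hb)
        calc ((N + 1 : ℕ) : ℕ∞) = N + 1 := by push_cast; rfl
          _ ≤ a.order + b.order := add_le_add (ih.1 ha) hb'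
          _ ≤ (a * b).order := le_order_mul
      · exact le_trans (le_min ha hb) min_order_le_add
    · obtain ⟨g, rfl, hg⟩ := exists_eq_sum_X_mul hf
      refine Ideal.sum_mem _ fun j _ => ?_
      rw [pow_succ']
      exact Ideal.mul_mem_mul (mem_mx_iff.2 (constantCoeff_X j)) (ih.2 (hg j))

theorem eq_zero_of_forall_mem_mx_pow {f : PS K n} (hf : ∀ N, f ∈ mx K n ^ N) : f = 0 :=
  order_eq_top_iff.1 (ENat.eq_top_iff_forall_ge.2 fun N => mem_mx_pow_iff.1 (hf N))

theorem pderiv_mem_mx_pow (i : Fin n) {N : ℕ} {f : PS K n} (hf : f ∈ mx K n ^ (N + 1)) :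
    pderiv K i f ∈ mx K n ^ N := by
  refine mem_mx_pow_iff.2 (nat_le_order fun d hd => ?_)
  rw [coeff_pderiv, coeff_of_lt_order, zero_mul]
  refine lt_of_lt_of_le ?_ (mem_mx_pow_iff.1 hf)
  simp only [map_add, Finsupp.degree_single]
  exact_mod_cast (by omega : d.degree + 1 < N + 1)

theorem sub_trunc'_mem_mx_pow (N : ℕ) (f : PS K n) :
    f - trunc' K (Finsupp.equivFunOnFinite.symm fun _ => N) f ∈ mx K n ^ (N + 1) := by
  refine mem_mx_pow_iff.2 (nat_le_order fun d hd => ?_)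
  rw [map_sub, MvPolynomial.coeff_coe, coeff_trunc', if_pos, sub_self]
  exact fun j => (Finsupp.le_degree j d).trans (by simpa using Nat.lt_succ_iff.1 hd)

theorem derivation_apply_eq_zero_of_map_X (D : Derivation K (PS K n) (PS K n))
    (hX : ∀ j, D (X j) = 0) (hD : ∀ N f, f ∈ mx K n ^ (N + 1) → D f ∈ mx K n ^ N)
    (f : PS K n) : D f = 0 := by
  have hpoly (p : MvPolynomial (Fin n) K) : D p = 0 := by
    induction p using MvPolynomial.induction_on with
    | C a => rw [MvPolynomial.coe_C]; exact D.map_algebraMap a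
    | add p q hp hq => rw [MvPolynomial.coe_add, map_add, hp, hq, add_zero]
    | mul_X p j hp =>
      rw [MvPolynomial.coe_mul, MvPolynomial.coe_X, D.leibniz, hp, hX, smul_zero, smul_zero,
        add_zero]
  refine eq_zero_of_forall_mem_mx_pow fun N => ?_
  have := hD N _ (sub_trunc'_mem_mx_pow N f)
  rwa [map_sub, hpoly, sub_zero] at this

theorem derivation_apply_eq_sum_pderiv (D : Derivation K (PS K n) (PS K n))
    (hD : ∀ N f, f ∈ mx K n ^ (N + 1) → D f ∈ mx K n ^ N) (f : PS K n) :
    D f = ∑ j, pderiv K j f * D (X j) := by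
  let E : Derivation K (PS K n) (PS K n) := D - ∑ j, D (X j) • pderiv K j
  have hE (g : PS K n) : E g = D g - ∑ j, D (X j) * pderiv K j g := by
    rw [Derivation.sub_apply, ← Derivation.coeFnAddMonoidHom_apply (∑ j, _), map_sum,
      Finset.sum_apply]
    rfl
  have := derivation_apply_eq_zero_of_map_X E (fun i => ?_) (fun N g hg => ?_) f
  · simpa [hE, sub_eq_zero, mul_comm] using this
  · simp [hE, pderiv_X, Pi.single_apply]
  · rw [hE]
    exact sub_mem (hD N g hg) (sum_mem fun j _ => Ideal.mul_mem_left _ _ (pderiv_mem_mx_pow j hg))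

theorem map_mem_mx_iff (ψ : PS K n ≃ₐ[K] PS K n) {f : PS K n} : ψ f ∈ mx K n ↔ f ∈ mx K n := by
  rw [mem_mx_iff_not_isUnit, mem_mx_iff_not_isUnit, isUnit_map_iff]

theorem map_mx (ψ : PS K n ≃ₐ[K] PS K n) : (mx K n).map ψ = mx K n := by
  ext f
  rw [Ideal.mem_map_of_equiv]
  refine ⟨fun ⟨g, hg, hgf⟩ => hgf ▸ (map_mem_mx_iff ψ).2 hg, fun hf => ⟨ψ.symm f, ?_, ?_⟩⟩
  · rwa [← map_mem_mx_iff ψ, ψ.apply_symm_apply]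
  · exact ψ.apply_symm_apply f

theorem map_mem_mx_pow (ψ : PS K n ≃ₐ[K] PS K n) {N : ℕ} {f : PS K n} (hf : f ∈ mx K n ^ N) :
    ψ f ∈ mx K n ^ N := by
  simpa only [Ideal.map_pow, map_mx] using Ideal.mem_map_of_mem ψ hf

theorem pderiv_map_mem_map_jId (ψ : PS K n ≃ₐ[K] PS K n) (i : Fin n) (f : PS K n) :
    pderiv K i (ψ f) ∈ (jId f).map ψ := by
  let D := (pderiv K i).conj ψ
  have hD := derivation_apply_eq_sum_pderiv D
    (fun N g hg => map_mem_mx_pow ψ.symm (pderiv_mem_mx_pow i (map_mem_mx_pow ψ hg))) f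
  have hψD : pderiv K i (ψ f) = ψ (D f) := by rw [Derivation.conj_apply, ψ.apply_symm_apply]
  rw [hψD, hD, map_sum]
  refine sum_mem fun j _ => ?_
  rw [map_mul]
  refine Ideal.mul_mem_right _ _ (Ideal.mem_map_of_mem ψ (Ideal.subset_span ⟨j, ?_⟩))
  exact pd_eq_pderiv j f

theorem jId_map_le (ψ : PS K n ≃ₐ[K] PS K n) (f : PS K n) : jId (ψ f) ≤ (jId f).map ψ :=
  Ideal.span_le.2 <| Set.range_subset_iff.2 fun i => by
    rw [SetLike.mem_coe, pd_eq_pderiv]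
    exact pderiv_map_mem_map_jId ψ i f

theorem map_jId (ψ : PS K n ≃ₐ[K] PS K n) (f : PS K n) : (jId f).map ψ = jId (ψ f) := by
  refine le_antisymm (Ideal.map_le_iff_le_comap.2 fun x hx => ?_) (jId_map_le ψ f)
  have hx' : x ∈ (jId (ψ f)).map ψ.symm := by
    refine jId_map_le ψ.symm (ψ f) ?_
    rwa [ψ.symm_apply_apply]
  obtain ⟨y, hy, rfl⟩ := (Ideal.mem_map_of_equiv ψ.symm x).1 hx'
  rwa [Ideal.mem_comap, ψ.apply_symm_apply]

theorem map_MkId (ψ : PS K n ≃ₐ[K] PS K n) (k : ℕ) (f : PS K n) :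
    (MkId k f).map ψ = MkId k (ψ f) := by
  rw [MkId, MkId, Ideal.map_mul, Ideal.map_pow, map_mx, map_jId]

end

theorem stmt_2_general {K : Type*} [Field K] {n : ℕ} (f g : PS K n)
    (h : RightEquiv f g) :
    ∀ k : ℕ, ∃ e : (PS K n ⧸ MkId k f) ≃ₐ[K] (PS K n ⧸ MkId k g),
      e (Ideal.Quotient.mk (MkId k f) f) = Ideal.Quotient.mk (MkId k g) g := by
  obtain ⟨ψ, rfl⟩ := h
  exact fun k => ⟨Ideal.quotientEquivAlg _ _ ψ (map_MkId ψ k f).symm, rfl⟩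

/-- right equivalent power series have, for every `k`, isomorphic
`k`-th Milnor algebras as `K[[t]]`-algebras, i.e. there is a `K`-algebra
isomorphism sending the class of `f` to the class of `g`. -/
theorem stmt_2 {K : Type*} [Field K] {n : ℕ} (f g : PS K n)
    (hf : f ∈ mx K n) (hg : g ∈ mx K n)
    (h : RightEquiv f g) :
    ∀ k : ℕ, ∃ e : (PS K n ⧸ MkId k f) ≃ₐ[K] (PS K n ⧸ MkId k g),
      e (Ideal.Quotient.mk (MkId k f) f) = Ideal.Quotient.mk (MkId k g) g :=
  stmt_2_general f g h
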